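/- If the twisted-cube support C(c,ℓ) is closed in ℝ^n, then m_σ ∈ C(c,ℓ) for every sign vector σ ∈ {+,−}^n. -/

import Mathlib

/-- The affine functions `A_j(x) = ℓ_j − Σ_{k>j} c_{jk} x_k` (for the top index the sum
is empty so `A_n = ℓ_n`). Indices are 0-based via `Fin n`. -/
def Afun (n : ℕ) (c : Fin n → Fin n → ℤ) (L : Fin n → ℤ) (j : Fin n) (x : Fin n → ℝ) : ℝ :=
  (L j : ℝ) - ∑ k ∈ Finset.univ.filter (fun k => j < k), (c j k : ℝ) * x k

/-- Condition (S-k): `A_k(x) < x_k < 0` or `0 ≤ x_k ≤ A_k(x)`. -/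
def Scond (n : ℕ) (c : Fin n → Fin n → ℤ) (L : Fin n → ℤ) (k : Fin n) (x : Fin n → ℝ) : Prop :=
  (Afun n c L k x < x k ∧ x k < 0) ∨ (0 ≤ x k ∧ x k ≤ Afun n c L k x)

/-- The twisted-cube support `C(c,ℓ)`. -/
def Cset (n : ℕ) (c : Fin n → Fin n → ℤ) (L : Fin n → ℤ) : Set (Fin n → ℝ) :=
  {x | ∀ k, Scond n c L k x}

/-- The polytope `P(c,ℓ) = {x : 0 ≤ x_j ≤ A_j(x) for all j}`. -/
def Pset (n : ℕ) (c : Fin n → Fin n → ℤ) (L : Fin n → ℤ) : Set (Fin n → ℝ) :=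
  {x | ∀ j, 0 ≤ x j ∧ x j ≤ Afun n c L j x}

/-- Condition (P): for each `k`, whenever the coordinates above `k` satisfy
`0 ≤ x_j ≤ A_j(x)`, one has `A_k(x) ≥ 0`. (For the top index this says `ℓ_n ≥ 0`.) -/
def CondP (n : ℕ) (c : Fin n → Fin n → ℤ) (L : Fin n → ℤ) : Prop :=
  ∀ k : Fin n, ∀ x : Fin n → ℝ,
    (∀ j : Fin n, k < j → 0 ≤ x j ∧ x j ≤ Afun n c L j x) →
    0 ≤ Afun n c L k x

/-- The Cartier data `m_σ` for a sign vector `σ` (`true` = `+`, `false` = `−`), defined by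
downward recursion: `m_{σ,j} = 0` if `σ_j = +`, and `m_{σ,j} = A_j(m_σ)` if `σ_j = −`. -/
noncomputable def mvec (n : ℕ) (c : Fin n → Fin n → ℤ) (L : Fin n → ℤ)
    (σ : Fin n → Bool) (j : Fin n) : ℝ :=
  if σ j then 0
  else (L j : ℝ) - ∑ k ∈ (Finset.univ.filter (fun k => j < k)).attach,
      (c j k.1 : ℝ) * mvec n c L σ k.1
termination_by n - j.1
decreasing_by
  have hk := Fin.lt_iff_val_lt_val.mp (Finset.mem_filter.mp k.2).2
  have := k.1.isLt
  omega

/-! If some `A_k(m_σ)` were negative, take the largest such `k`. Keeping the coordinates of `m_σ`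
above `k`, putting `t ∈ (A_k(m_σ), 0)` at `k` and completing continuously below `k` (by
`x_j = min (A_j(x), 0) / 2`, which always satisfies (S-j)) gives points of `C(c,ℓ)` converging, as
`t → 0`, to a point violating (S-k). Hence closedness forces `A_k(m_σ) ≥ 0` for all `k`, and then
`m_σ ∈ C(c,ℓ)` since each `m_{σ,k}` is `0` or `A_k(m_σ)`. -/

section TwistedCube

variable {n : ℕ} (c : Fin n → Fin n → ℤ) (L : Fin n → ℤ)

lemma Afun_congr {j : Fin n} {x y : Fin n → ℝ} (hxy : ∀ i, j < i → x i = y i) :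
    Afun n c L j x = Afun n c L j y := by
  unfold Afun
  congr 1
  exact Finset.sum_congr rfl fun i hi => by rw [hxy i (Finset.mem_filter.mp hi).2]

lemma Scond_congr {j : Fin n} {x y : Fin n → ℝ} (hxy : ∀ i, j ≤ i → x i = y i) :
    Scond n c L j x ↔ Scond n c L j y := by
  rw [Scond, Scond, hxy j le_rfl, Afun_congr c L fun i hi => hxy i hi.le]

lemma Scond_of_nonneg {j : Fin n} {x : Fin n → ℝ} (hA : 0 ≤ Afun n c L j x)
    (hx : x j = 0 ∨ x j = Afun n c L j x) : Scond n c L j x := by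
  right
  rcases hx with hx | hx <;> rw [hx] <;> simp [hA]

lemma Scond_of_eq_min_half {j : Fin n} {x : Fin n → ℝ}
    (hx : x j = min (Afun n c L j x) 0 / 2) : Scond n c L j x := by
  rcases le_or_gt 0 (Afun n c L j x) with hA | hA
  · exact Scond_of_nonneg c L hA (.inl (by rw [hx, min_eq_right hA, zero_div]))
  · left
    rw [hx, min_eq_left hA.le]
    constructor <;> linarith

lemma not_Scond_of_eq_zero {j : Fin n} {x : Fin n → ℝ} (hx : x j = 0)
    (hA : Afun n c L j x < 0) : ¬Scond n c L j x := by
  rintro (⟨_, h⟩ | ⟨_, h⟩) <;> linarith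

lemma mvec_eq_ite (σ : Fin n → Bool) (j : Fin n) :
    mvec n c L σ j = if σ j then 0 else Afun n c L j (mvec n c L σ) := by
  rw [mvec, Afun, Finset.sum_attach _ fun i => (c j i : ℝ) * mvec n c L σ i]

lemma mvec_Scond_of_nonneg (σ : Fin n → Bool) {j : Fin n}
    (hA : 0 ≤ Afun n c L j (mvec n c L σ)) : Scond n c L j (mvec n c L σ) := by
  refine Scond_of_nonneg c L hA ?_
  rw [mvec_eq_ite]
  split_ifs <;> simp

noncomputable def fillBelow (k : Fin n) (z : Fin n → ℝ) (j : Fin n) : ℝ :=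
  if k ≤ j then z j
  else min ((L j : ℝ) - ∑ i ∈ (Finset.univ.filter (fun i => j < i)).attach,
      (c j i.1 : ℝ) * fillBelow k z i.1) 0 / 2
termination_by n - j.1
decreasing_by
  have hk := Fin.lt_def.mp (Finset.mem_filter.mp i.2).2
  have := i.1.isLt
  omega

variable {c L}

lemma fillBelow_of_le {k j : Fin n} (z : Fin n → ℝ) (hj : k ≤ j) :
    fillBelow c L k z j = z j := by
  rw [fillBelow, if_pos hj]

lemma fillBelow_of_lt {k j : Fin n} (z : Fin n → ℝ) (hj : j < k) :
    fillBelow c L k z j = min (Afun n c L j (fillBelow c L k z)) 0 / 2 := by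
  rw [fillBelow, if_neg (not_le.mpr hj), Afun,
    Finset.sum_attach _ fun i => (c j i : ℝ) * fillBelow c L k z i]

lemma continuous_fillBelow_apply (k j : Fin n) : Continuous fun z => fillBelow c L k z j := by
  induction j using WellFoundedGT.induction with
  | _ j ih =>
  rcases lt_or_ge j k with hj | hj
  · simp_rw [fillBelow_of_lt _ hj, Afun]
    refine ((continuous_const.sub (continuous_finsetSum _ fun i hi => ?_)).min
      continuous_const).div_const 2
    exact continuous_const.mul (ih i (Finset.mem_filter.mp hi).2)
  · simp_rw [fillBelow_of_le _ hj]
    exact continuous_apply j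

lemma fillBelow_mem_Cset {k : Fin n} {z : Fin n → ℝ} (hz : ∀ j, k ≤ j → Scond n c L j z) :
    fillBelow c L k z ∈ Cset n c L := by
  intro j
  rcases lt_or_ge j k with hj | hj
  · exact Scond_of_eq_min_half c L (fillBelow_of_lt z hj)
  · exact (Scond_congr c L fun i hi => fillBelow_of_le z (hj.trans hi)).mpr (hz j hj)

lemma Afun_nonneg_of_isClosed (h : IsClosed (Cset n c L)) {k : Fin n} {x : Fin n → ℝ}
    (hx : ∀ j, k < j → Scond n c L j x) : 0 ≤ Afun n c L k x := by
  by_contra! hA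
  set y : ℝ → Fin n → ℝ := fun t => fillBelow c L k (Function.update x k t)
  have hAy : ∀ t, Afun n c L k (y t) = Afun n c L k x := fun t =>
    Afun_congr c L fun i hi => by
      simp [y, fillBelow_of_le _ hi.le, Function.update_of_ne hi.ne']
  have hy_mem : Set.Ioo (Afun n c L k x) 0 ⊆ y ⁻¹' Cset n c L := by
    rintro t ⟨ht₁, ht₂⟩
    refine fillBelow_mem_Cset fun j hj => ?_
    rcases hj.eq_or_lt with rfl | hj
    · left
      rw [Function.update_self, Afun_congr c L fun i hi => Function.update_of_ne hi.ne' _ _]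
      exact ⟨ht₁, ht₂⟩
    · exact (Scond_congr c L fun i hi => Function.update_of_ne (hj.trans_le hi).ne' _ _).mpr
        (hx j hj)
  have hy_cont : Continuous y :=
    continuous_pi fun j => (continuous_fillBelow_apply k j).comp
      (continuous_const.update k continuous_id)
  have hy0 : y 0 ∈ Cset n c L := by
    have := (h.preimage hy_cont).closure_subset_iff.mpr hy_mem
    rw [closure_Ioo hA.ne] at this
    exact this ⟨hA.le, le_rfl⟩
  exact not_Scond_of_eq_zero c L (by simp [y, fillBelow_of_le]) (by rwa [hAy]) (hy0 k)

end TwistedCube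

theorem mvec_mem_Cset_of_isClosed_general (n : ℕ)
    (c : Fin n → Fin n → ℤ) (L : Fin n → ℤ)
    (h : IsClosed (Cset n c L)) :
    ∀ σ : Fin n → Bool, mvec n c L σ ∈ Cset n c L := by
  intro σ k
  induction k using WellFoundedGT.induction with
  | _ k ih => exact mvec_Scond_of_nonneg c L σ (Afun_nonneg_of_isClosed h ih)

/-- if `C(c,ℓ)` is closed then `m_σ ∈ C(c,ℓ)` for every sign vector `σ`. -/
theorem mvec_mem_Cset_of_isClosed (n : ℕ) (hn : 0 < n)
    (c : Fin n → Fin n → ℤ) (L : Fin n → ℤ)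
    (h : IsClosed (Cset n c L)) :
    ∀ σ : Fin n → Bool, mvec n c L σ ∈ Cset n c L :=
  mvec_mem_Cset_of_isClosed_general n c L h
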